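/- In the double extension 𝔤(𝔨) = 𝔥 ⊕ 𝔨 ⊕ 𝔫 ⊕ 𝔪 as above, the subspace 𝔩 = 𝔥 ⊕ 𝔞 ⊕ 𝔪 (with 𝔞 the diagonal in 𝔨 ⊕ 𝔫) is an ideal, and 𝔤(𝔨) is isomorphic to the semidirect product 𝔨 ⋉ 𝔩. -/
import Mathlib


open scoped RealInnerProductSpace BigOperators

/-- The Nomizu bracket of the double extension `𝔤(𝔨) = 𝔥 ⊕ 𝔨 ⊕ 𝔫 ⊕ 𝔪`, modelled on
`(𝔪 →ₗ 𝔪) × K × K × M` (with `𝔥 ⊆ 𝔰𝔬(𝔪)` as endomorphisms of `𝔪`, the isotropy part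
`𝔥 ⊕ 𝔨` acting on `𝔫 ⊕ 𝔪` via `ad ⊕ ψ`, `ψ = ad ⊕ φ`), built from the extended model
`T = T₀ + Σᵢ φ(kᵢ)∧nᵢ + 2T_𝔫`, `R = R₀ + Σᵢ ψ(kᵢ)⊙ψ(kᵢ)`. -/
noncomputable def dblBracket {K M : Type*} [LieRing K] [LieAlgebra ℝ K]
    [NormedAddCommGroup M] [InnerProductSpace ℝ M] {l : ℕ}
    (Bf : K →ₗ[ℝ] K →ₗ[ℝ] ℝ) (k : Fin l → K) (φ : K →ₗ[ℝ] M →ₗ[ℝ] M)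
    (T0 : M →ₗ[ℝ] M →ₗ[ℝ] M) (R0 : M →ₗ[ℝ] M →ₗ[ℝ] (M →ₗ[ℝ] M))
    (u v : (M →ₗ[ℝ] M) × K × K × M) : (M →ₗ[ℝ] M) × K × K × M :=
  let A := u.1; let a := u.2.1; let n := u.2.2.1; let x := u.2.2.2
  let A' := v.1; let b := v.2.1; let m := v.2.2.1; let y := v.2.2.2
  (A ∘ₗ A' - A' ∘ₗ A - R0 x y,
   ⁅a, b⁆ - ∑ i : Fin l, (Bf ⁅k i, n⁆ m + ⟪φ (k i) x, y⟫) • k i,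
   ⁅a, m⁆ - ⁅b, n⁆ - ((2 : ℝ) • ⁅n, m⁆ + ∑ i : Fin l, ⟪φ (k i) x, y⟫ • k i),
   A y - A' x + φ a y - φ b x - (φ n y - φ m x + T0 x y))

/-- An element of `𝔤(𝔨)` lies in `𝔩 = 𝔥 ⊕ 𝔞 ⊕ 𝔪` iff its `𝔨`- and `𝔫`-components
coincide (i.e. its `𝔨 ⊕ 𝔫`-part lies on the diagonal `𝔞`). -/
def memL {K M : Type*} [LieRing K] [LieAlgebra ℝ K]
    [NormedAddCommGroup M] [InnerProductSpace ℝ M]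
    (u : (M →ₗ[ℝ] M) × K × K × M) : Prop :=
  u.2.1 = u.2.2.1

/-- In the double extension `𝔤(𝔨) = 𝔥 ⊕ 𝔨 ⊕ 𝔫 ⊕ 𝔪`, the subspace
`𝔩 = 𝔥 ⊕ 𝔞 ⊕ 𝔪` is an ideal, and `𝔤(𝔨)` is the semidirect product `𝔨 ⋉ 𝔩`:
the copy of `𝔨` is a subalgebra and every element decomposes uniquely as an element of
`𝔨` plus an element of `𝔩`. -/
theorem l_is_ideal_and_semidirect
    {K M : Type*} [LieRing K] [LieAlgebra ℝ K]
    [NormedAddCommGroup M] [InnerProductSpace ℝ M] {l : ℕ}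
    (Bf : K →ₗ[ℝ] K →ₗ[ℝ] ℝ)
    (hsymm : ∀ x y : K, Bf x y = Bf y x)
    (hinv : ∀ z x y : K, Bf ⁅z, x⁆ y + Bf x ⁅z, y⁆ = 0)
    (k : Fin l → K)
    (horth : ∀ i j, Bf (k i) (k j) = if i = j then (1 : ℝ) else 0)
    (hcomplete : ∀ x : K, ∑ i : Fin l, Bf x (k i) • k i = x)
    (φ : K →ₗ[ℝ] M →ₗ[ℝ] M)
    (hφLie : ∀ a b : K, φ ⁅a, b⁆ = φ a ∘ₗ φ b - φ b ∘ₗ φ a)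
    (hφskew : ∀ (a : K) (x y : M), ⟪φ a x, y⟫ = -⟪x, φ a y⟫)
    (T0 : M →ₗ[ℝ] M →ₗ[ℝ] M) (R0 : M →ₗ[ℝ] M →ₗ[ℝ] (M →ₗ[ℝ] M)) :
    -- 𝔩 is an ideal
    (∀ u v : (M →ₗ[ℝ] M) × K × K × M, memL v → memL (dblBracket Bf k φ T0 R0 u v)) ∧
    -- the copy of 𝔨 is a subalgebra
    (∀ a b : K, dblBracket Bf k φ T0 R0 (0, a, 0, 0) (0, b, 0, 0) = (0, ⁅a, b⁆, 0, 0)) ∧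
    -- 𝔤(𝔨) = 𝔨 ⊕ 𝔩 as vector spaces
    (∀ u : (M →ₗ[ℝ] M) × K × K × M,
      ∃! p : K × ((M →ₗ[ℝ] M) × K × K × M),
        memL p.2 ∧ u = (0, p.1, 0, 0) + p.2) := by
  refine ⟨?_, ?_, ?_⟩
  · rintro ⟨A, a, n, x⟩ ⟨A', b, m, y⟩ hv
    simp only [memL] at hv ⊢
    simp only [dblBracket]
    subst hv
    have key : ∀ i, Bf ⁅k i, n⁆ b = Bf ⁅n, b⁆ (k i) := by
      intro i
      have h := hinv n (k i) b
      have : Bf ⁅k i, n⁆ b = Bf (k i) ⁅n, b⁆ := by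
        rw [← lie_skew n (k i), map_neg, LinearMap.neg_apply] at h
        linarith
      rw [this, hsymm]
    have hsum : ∑ i : Fin l, (Bf ⁅k i, n⁆ b + ⟪φ (k i) x, y⟫) • k i
        = ⁅n, b⁆ + ∑ i : Fin l, ⟪φ (k i) x, y⟫ • k i := by
      rw [← hcomplete ⁅n, b⁆, ← Finset.sum_add_distrib]
      refine Finset.sum_congr rfl fun i _ => ?_
      rw [key i, hsymm ⁅n, b⁆ (k i), add_smul]
    rw [hsum, ← lie_skew n b]
    module
  · intro a b
    simp only [dblBracket]
    simp
  · intro u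
    refine ⟨(u.2.1 - u.2.2.1, (u.1, u.2.2.1, u.2.2.1, u.2.2.2)), ⟨rfl, ?_⟩, ?_⟩
    · show u = _
      ext <;> simp
    · rintro ⟨c, A, a, n, x⟩ ⟨h1, h2⟩
      simp only [memL] at h1
      subst h1
      have := congrArg Prod.fst h2
      have h2' := congrArg (fun z => z.2) h2
      simp only [Prod.fst_add, Prod.snd_add] at this h2'
      have hk := congrArg Prod.fst h2'
      have hr := congrArg (fun z => z.2) h2'
      simp only [Prod.fst_add, Prod.snd_add] at hk hr
      have hn := congrArg Prod.fst hr
      have hx := congrArg (fun z => z.2) hr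
      simp only [Prod.fst_add, Prod.snd_add] at hn hx
      simp only [zero_add] at this hk hn hx
      subst this hn hx
      have hc : c = u.2.1 - u.2.2.1 := by rw [hk]; abel
      simp [hc, Prod.ext_iff]
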